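/- arXiv:0910.0283 — 4 statements merged into one kernel-verified Lean document; each statement's English description precedes it below -/
import Mathlib

section
/- Let A : X → Y be a bijective bounded linear operator between Banach spaces. If ‖A T A⁻¹‖ ≤ ‖T‖ for all invertible operators T ∈ B(X), then A/‖A‖ is a bijective isometry; that is, A is a scalar multiple of an isometry. -/
open Metric Set Pointwise

noncomputable def minMod {X Y : Type*} [NormedAddCommGroup X] [NormedSpace ℂ X]
    [NormedAddCommGroup Y] [NormedSpace ℂ Y] (T : X →L[ℂ] Y) : ℝ :=
  sInf ((fun x => ‖T x‖) '' {x | ‖x‖ = 1})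

noncomputable def surjMod {X Y : Type*} [NormedAddCommGroup X] [NormedSpace ℂ X]
    [NormedAddCommGroup Y] [NormedSpace ℂ Y] (T : X →L[ℂ] Y) : ℝ :=
  sSup {ε : ℝ | 0 ≤ ε ∧ ε • closedBall (0 : Y) 1 ⊆ T '' closedBall (0 : X) 1}

noncomputable def redMinMod {X Y : Type*} [NormedAddCommGroup X] [NormedSpace ℂ X]
    [NormedAddCommGroup Y] [NormedSpace ℂ Y] (T : X →L[ℂ] Y) : ℝ :=
  sInf ((fun x => ‖T x‖) '' {x | 1 ≤ infDist x (LinearMap.ker (T : X →ₗ[ℂ] Y) : Set X)})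

variable {X Y : Type*} [NormedAddCommGroup X] [NormedSpace ℂ X] [CompleteSpace X]
  [NormedAddCommGroup Y] [NormedSpace ℂ Y] [CompleteSpace Y]

/-! For `f` with `f x = 1` and `f w ≠ 0`, the dilatransvection `T = 1 + f(·) • (w - x)` is
invertible, sends `x` to `w` and has norm at most `1 + ‖f‖ ‖w - x‖`. Applied to `T`, the hypothesis
gives `‖A w‖ ≤ (1 + ‖f‖ ‖w - x‖) ‖A x‖`, first on the dense set `{f ≠ 0}` and then everywhere.
This bound is affine in `‖w‖` with slope `‖f‖ ‖A x‖`, so by homogeneity `‖A‖ ≤ ‖f‖ ‖A x‖`; a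
norming functional of `x`, rescaled to `f x = 1`, has `‖f‖ = ‖x‖⁻¹`, whence `‖A‖ ‖x‖ ≤ ‖A x‖`. -/

open Filter Topology

section
variable {R V : Type*} [Ring R] [TopologicalSpace R] [AddCommGroup V] [Module R V]
  [TopologicalSpace V] [IsTopologicalAddGroup V] [ContinuousSMul R V]

theorem LinearMap.continuous_transvection (f : V →L[R] R) (v : V) :
    Continuous (LinearMap.transvection (f : V →ₗ[R] R) v) := by
  rw [show ⇑(LinearMap.transvection (f : V →ₗ[R] R) v) = fun x => x + f x • v from
    funext fun _ => LinearMap.transvection.apply _ _ _]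
  fun_prop

namespace ContinuousLinearEquiv

noncomputable def dilatransvection {f : V →L[R] R} {v : V} (h : IsUnit (1 + f v)) :
    V ≃L[R] V where
  toLinearEquiv := LinearEquiv.dilatransvection (f := (f : V →ₗ[R] R)) h
  continuous_toFun := LinearMap.continuous_transvection f v
  continuous_invFun := LinearMap.continuous_transvection f _

theorem dilatransvection_apply {f : V →L[R] R} {v : V} (h : IsUnit (1 + f v)) (x : V) :
    dilatransvection h x = x + f x • v :=
  LinearEquiv.dilatransvection.apply

end ContinuousLinearEquiv
end

section
variable {𝕜 E F : Type*} [RCLike 𝕜] [NormedAddCommGroup E] [NormedSpace 𝕜 E]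
  [NormedAddCommGroup F] [NormedSpace 𝕜 F]

theorem ContinuousLinearMap.dense_setOf_apply_ne_zero {f : E →L[𝕜] 𝕜} (hf : f ≠ 0) :
    Dense {w | f w ≠ 0} := by
  change Dense (LinearMap.ker (f : E →ₗ[𝕜] 𝕜) : Set E)ᶜ
  rw [← interior_eq_empty_iff_dense_compl, ← not_nonempty_iff_eq_empty]
  exact fun hker => hf <| ContinuousLinearMap.coe_injective <|
    LinearMap.ker_eq_top.1 <| Submodule.eq_top_of_nonempty_interior' _ hker

theorem ContinuousLinearMap.norm_apply_le_of_le_mul_add (g : E →L[𝕜] F) {c d : ℝ}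
    (h : ∀ w, ‖g w‖ ≤ c * ‖w‖ + d) (w : E) : ‖g w‖ ≤ c * ‖w‖ := by
  have hlim : Tendsto (fun n : ℕ => c * ‖w‖ + d / n) atTop (𝓝 (c * ‖w‖)) := by
    simpa using tendsto_const_nhds.add (tendsto_const_div_atTop_nhds_zero_nat d)
  refine ge_of_tendsto hlim ((eventually_gt_atTop 0).mono fun n hn => ?_)
  have hn' : (0 : ℝ) < n := by exact_mod_cast hn
  have := h ((n : 𝕜) • w)
  rw [map_smul, norm_smul, norm_smul, RCLike.norm_natCast] at this
  rw [← sub_le_iff_le_add', le_div_iff₀ hn']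
  nlinarith

namespace ContinuousLinearEquiv

theorem norm_dilatransvection_le {f : E →L[𝕜] 𝕜} {v : E} (h : IsUnit (1 + f v)) :
    ‖(dilatransvection h : E →L[𝕜] E)‖ ≤ 1 + ‖f‖ * ‖v‖ := by
  refine ContinuousLinearMap.opNorm_le_bound _ (by positivity) fun x => ?_
  calc ‖x + f x • v‖ ≤ ‖x‖ + ‖f x‖ * ‖v‖ := (norm_add_le _ _).trans_eq (by rw [norm_smul])
    _ ≤ ‖x‖ + ‖f‖ * ‖x‖ * ‖v‖ := by gcongr; exact f.le_opNorm x
    _ = (1 + ‖f‖ * ‖v‖) * ‖x‖ := by ring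

theorem norm_apply_le_of_forall_norm_conj_le (A : E ≃L[𝕜] F)
    (h : ∀ T : E ≃L[𝕜] E,
      ‖(A : E →L[𝕜] F).comp ((T : E →L[𝕜] E).comp (A.symm : F →L[𝕜] E))‖ ≤ ‖(T : E →L[𝕜] E)‖)
    {f : E →L[𝕜] 𝕜} {x w : E} (hfx : f x = 1) (hfw : f w ≠ 0) :
    ‖A w‖ ≤ (1 + ‖f‖ * ‖w - x‖) * ‖A x‖ := by
  have hunit : IsUnit (1 + f (w - x)) := by simpa [hfx] using hfw
  set T := dilatransvection hunit
  have hTx : T x = w := by simp [T, dilatransvection_apply, hfx]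
  calc ‖A w‖ = ‖(A : E →L[𝕜] F).comp ((T : E →L[𝕜] E).comp (A.symm : F →L[𝕜] E)) (A x)‖ := by
        simp [hTx]
    _ ≤ ‖(A : E →L[𝕜] F).comp ((T : E →L[𝕜] E).comp (A.symm : F →L[𝕜] E))‖ * ‖A x‖ :=
        ContinuousLinearMap.le_opNorm _ _
    _ ≤ ‖(T : E →L[𝕜] E)‖ * ‖A x‖ := by gcongr; exact h T
    _ ≤ (1 + ‖f‖ * ‖w - x‖) * ‖A x‖ := by gcongr; exact norm_dilatransvection_le hunit

theorem opNorm_le_of_forall_norm_conj_le (A : E ≃L[𝕜] F)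
    (h : ∀ T : E ≃L[𝕜] E,
      ‖(A : E →L[𝕜] F).comp ((T : E →L[𝕜] E).comp (A.symm : F →L[𝕜] E))‖ ≤ ‖(T : E →L[𝕜] E)‖)
    {f : E →L[𝕜] 𝕜} {x : E} (hfx : f x = 1) :
    ‖(A : E →L[𝕜] F)‖ ≤ ‖f‖ * ‖A x‖ := by
  have hf : f ≠ 0 := by rintro rfl; simp at hfx
  have hbound (w : E) : ‖A w‖ ≤ (1 + ‖f‖ * ‖w - x‖) * ‖A x‖ :=
    (f.dense_setOf_apply_ne_zero hf).induction
      (fun w hw => norm_apply_le_of_forall_norm_conj_le A h hfx hw)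
      (isClosed_le (by fun_prop) (by fun_prop)) w
  refine ContinuousLinearMap.opNorm_le_bound _ (by positivity) fun w =>
    (A : E →L[𝕜] F).norm_apply_le_of_le_mul_add (d := (1 + ‖f‖ * ‖x‖) * ‖A x‖) (fun w => ?_) w
  calc ‖A w‖ ≤ (1 + ‖f‖ * ‖w - x‖) * ‖A x‖ := hbound w
    _ ≤ (1 + ‖f‖ * (‖w‖ + ‖x‖)) * ‖A x‖ := by gcongr; exact norm_sub_le w x
    _ = ‖f‖ * ‖A x‖ * ‖w‖ + (1 + ‖f‖ * ‖x‖) * ‖A x‖ := by ring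

theorem opNorm_mul_norm_le_of_forall_norm_conj_le (A : E ≃L[𝕜] F)
    (h : ∀ T : E ≃L[𝕜] E,
      ‖(A : E →L[𝕜] F).comp ((T : E →L[𝕜] E).comp (A.symm : F →L[𝕜] E))‖ ≤ ‖(T : E →L[𝕜] E)‖)
    (x : E) : ‖(A : E →L[𝕜] F)‖ * ‖x‖ ≤ ‖A x‖ := by
  rcases eq_or_ne x 0 with rfl | hx
  · simp
  have hx' : 0 < ‖x‖ := norm_pos_iff.2 hx
  obtain ⟨g, hg, hgx⟩ := exists_dual_vector 𝕜 x hx'.ne'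
  have hfx : ((‖x‖⁻¹ : 𝕜) • g) x = 1 := by simp [hgx, hx]
  have := opNorm_le_of_forall_norm_conj_le A h hfx
  rw [norm_smul, hg, mul_one, norm_inv, RCLike.norm_ofReal, abs_norm, inv_mul_eq_div] at this
  rwa [← le_div_iff₀ hx']

end ContinuousLinearEquiv
end

theorem stmt11 (A : X ≃L[ℂ] Y)
    (h : ∀ T : X ≃L[ℂ] X,
      ‖(A : X →L[ℂ] Y).comp (((T : X →L[ℂ] X)).comp (A.symm : Y →L[ℂ] X))‖
        ≤ ‖(T : X →L[ℂ] X)‖) :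
    ∀ x : X, ‖A x‖ = ‖(A : X →L[ℂ] Y)‖ * ‖x‖ := fun x =>
  le_antisymm ((A : X →L[ℂ] Y).le_opNorm x) (A.opNorm_mul_norm_le_of_forall_norm_conj_le h x)
end

section
/- Let A : X → Y be a bijective bounded linear operator between Banach spaces. Then ‖A T A⁻¹‖ = ‖T‖ for all invertible T ∈ B(X) if and only if A is a scalar multiple of an isometry. -/
/-!
Conjugation by `A` is an algebra isomorphism, so it sends `1 + c • R` to `1 + c • A R A⁻¹`. For a
rank-one `R = f ⊗ x` the operator `1 + c • R` is invertible unless `1 + c f(x) = 0`, and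
`‖1 + c • R‖ = ‖c‖ ‖R‖ + O(1)`; letting `‖c‖ → ∞` gives `‖f ∘ A⁻¹‖ ‖A x‖ = ‖f‖ ‖x‖`. Fixing `f` of
norm one, `‖A x‖ / ‖x‖` is a constant `r > 0`, so `r⁻¹ • A` is an isometry. Conversely, if
`A = c • U` then conjugation by `A` is conjugation by the isometry `U`.
-/

open Metric Set Pointwise

section

variable {𝕜 R : Type*} [Field 𝕜] [Ring R] [Algebra 𝕜 R]

theorem isUnit_one_add_smul_of_mul_self_eq_smul {r : R} {a c : 𝕜} (hr : r * r = a • r)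
    (hc : 1 + c * a ≠ 0) : IsUnit (1 + c • r) := by
  set d := c / (1 + c * a)
  have hd : d * (1 + c * a) = c := div_mul_cancel₀ _ hc
  refine ⟨⟨1 + c • r, 1 - d • r, ?_, ?_⟩, rfl⟩
  · calc (1 + c • r) * (1 - d • r) = 1 + (c - d * (1 + c * a)) • r := by
          simp only [mul_sub, add_mul, smul_mul_smul_comm, hr, one_mul, mul_one]
          module
      _ = 1 := by rw [hd, sub_self, zero_smul, add_zero]
  · calc (1 - d • r) * (1 + c • r) = 1 + (c - d * (1 + c * a)) • r := by
          simp only [sub_mul, mul_add, smul_mul_smul_comm, hr, one_mul, mul_one]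
          module
      _ = 1 := by rw [hd, sub_self, zero_smul, add_zero]

end

section

variable {𝕜 E F : Type*} [RCLike 𝕜] [NormedAddCommGroup E] [NormedSpace 𝕜 E]
  [NormedAddCommGroup F] [NormedSpace 𝕜 F]

theorem ContinuousLinearMap.smulRight_mul_self (f : StrongDual 𝕜 E) (x : E) :
    f.smulRight x * f.smulRight x = f x • f.smulRight x := by
  ext y
  simp [smul_smul, mul_comm]

theorem ContinuousLinearEquiv.conjContinuousAlgEquiv_smulRight (A : E ≃L[𝕜] F)
    (f : StrongDual 𝕜 E) (x : E) :
    A.conjContinuousAlgEquiv (f.smulRight x) = (f ∘L (A.symm : F →L[𝕜] E)).smulRight (A x) := by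
  ext y
  simp

theorem exists_le_norm_one_add_mul_ne_zero (a : 𝕜) (t : ℝ) :
    ∃ c : 𝕜, t ≤ ‖c‖ ∧ 1 + c * a ≠ 0 := by
  by_cases h : 1 + ((|t| : ℝ) : 𝕜) * a = 0
  · refine ⟨-((|t| : ℝ) : 𝕜), by simp [le_abs_self], fun h' => ?_⟩
    have : (2 : 𝕜) = 0 := by linear_combination h + h'
    exact two_ne_zero this
  · exact ⟨(|t| : ℝ), by simp [le_abs_self], h⟩

theorem ContinuousLinearMap.abs_norm_one_add_sub_norm_le (B : E →L[𝕜] E) :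
    |‖1 + B‖ - ‖B‖| ≤ 1 :=
  (abs_norm_sub_norm_le _ _).trans (by rw [add_sub_cancel_right]; exact norm_id_le)

theorem norm_eq_of_forall_norm_one_add_smul_eq {R : E →L[𝕜] E} {S : F →L[𝕜] F}
    (h : ∀ t : ℝ, ∃ c : 𝕜, t ≤ ‖c‖ ∧ ‖1 + c • S‖ = ‖1 + c • R‖) : ‖S‖ = ‖R‖ := by
  by_contra hne
  have hδ : 0 < |‖S‖ - ‖R‖| := abs_pos.mpr (sub_ne_zero.mpr hne)
  obtain ⟨c, hc, hcSR⟩ := h (3 / |‖S‖ - ‖R‖|)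
  have hS := (c • S).abs_norm_one_add_sub_norm_le
  have hR := (c • R).abs_norm_one_add_sub_norm_le
  rw [norm_smul, hcSR] at hS
  rw [norm_smul] at hR
  have hclose : ‖c‖ * |‖S‖ - ‖R‖| ≤ 2 := by
    rw [← abs_of_nonneg (norm_nonneg c), ← abs_mul, mul_sub, abs_le]
    rw [abs_le] at hS hR
    constructor <;> linarith [hS.1, hS.2, hR.1, hR.2]
  rw [div_le_iff₀ hδ] at hc
  linarith

theorem ContinuousLinearEquiv.norm_comp_symm_mul_norm_apply (A : E ≃L[𝕜] F)
    (hA : ∀ T : E ≃L[𝕜] E, ‖A.conjContinuousAlgEquiv T‖ = ‖(T : E →L[𝕜] E)‖)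
    (f : StrongDual 𝕜 E) (x : E) :
    ‖f ∘L (A.symm : F →L[𝕜] E)‖ * ‖A x‖ = ‖f‖ * ‖x‖ := by
  rw [← ContinuousLinearMap.norm_smulRight_apply, ← ContinuousLinearMap.norm_smulRight_apply,
    ← A.conjContinuousAlgEquiv_smulRight]
  refine norm_eq_of_forall_norm_one_add_smul_eq fun t => ?_
  obtain ⟨c, htc, hc⟩ := exists_le_norm_one_add_mul_ne_zero (f x) t
  have hunit := isUnit_one_add_smul_of_mul_self_eq_smul (f.smulRight_mul_self x) hc
  have hT : (ContinuousLinearEquiv.unitsEquiv 𝕜 E hunit.unit : E →L[𝕜] E) =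
      1 + c • f.smulRight x := rfl
  refine ⟨c, htc, ?_⟩
  simpa [hT] using hA (ContinuousLinearEquiv.unitsEquiv 𝕜 E hunit.unit)

theorem ContinuousLinearEquiv.exists_pos_norm_apply_eq_mul (A : E ≃L[𝕜] F)
    (hA : ∀ T : E ≃L[𝕜] E, ‖A.conjContinuousAlgEquiv T‖ = ‖(T : E →L[𝕜] E)‖) :
    ∃ r : ℝ, 0 < r ∧ ∀ x, ‖A x‖ = r * ‖x‖ := by
  rcases subsingleton_or_nontrivial E with hE | hE
  · exact ⟨1, one_pos, fun x => by simp [Subsingleton.elim x 0]⟩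
  obtain ⟨f, hf, -⟩ := exists_dual_vector' 𝕜 (0 : E)
  have hfA : ∀ x, ‖f ∘L (A.symm : F →L[𝕜] E)‖ * ‖A x‖ = ‖x‖ := fun x => by
    simpa [hf] using A.norm_comp_symm_mul_norm_apply hA f x
  obtain ⟨x₀, hx₀⟩ := exists_ne (0 : E)
  have hpos : 0 < ‖f ∘L (A.symm : F →L[𝕜] E)‖ := by
    refine (norm_nonneg _).lt_of_ne fun h => hx₀ ?_
    simpa [← h] using (hfA x₀).symm
  refine ⟨‖f ∘L (A.symm : F →L[𝕜] E)‖⁻¹, inv_pos.mpr hpos, fun x => ?_⟩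
  rw [← hfA x, inv_mul_cancel_left₀ hpos.ne']

theorem ContinuousLinearEquiv.exists_linearIsometryEquiv_of_norm_apply_eq_mul (A : E ≃L[𝕜] F)
    {r : ℝ} (hr : 0 < r) (hA : ∀ x, ‖A x‖ = r * ‖x‖) :
    ∃ U : E ≃ₗᵢ[𝕜] F, ∀ x, A x = (r : 𝕜) • U x := by
  have hr' : (r : 𝕜) ≠ 0 := RCLike.ofReal_ne_zero.mpr hr.ne'
  refine ⟨⟨A.toLinearEquiv.trans (LinearEquiv.smulOfNeZero 𝕜 F _ (inv_ne_zero hr')),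
    fun x => ?_⟩, fun x => ?_⟩
  · simp [norm_smul, hA, abs_of_pos hr, hr.ne']
  · simp [smul_inv_smul₀ hr']

theorem ContinuousLinearEquiv.conjContinuousAlgEquiv_eq_of_apply_eq_smul {A : E ≃L[𝕜] F}
    {U : E ≃ₗᵢ[𝕜] F} {c : 𝕜} (hAU : ∀ x, A x = c • U x) (T : E →L[𝕜] E) :
    A.conjContinuousAlgEquiv T = U.toContinuousLinearEquiv.conjContinuousAlgEquiv T := by
  ext y
  obtain ⟨x, rfl⟩ := A.surjective y
  rw [conjContinuousAlgEquiv_apply_apply, conjContinuousAlgEquiv_apply_apply, A.symm_apply_apply,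
    hAU x, hAU (T x)]
  simp

theorem LinearIsometryEquiv.norm_conjContinuousAlgEquiv (U : E ≃ₗᵢ[𝕜] F) (T : E →L[𝕜] E) :
    ‖U.toContinuousLinearEquiv.conjContinuousAlgEquiv T‖ = ‖T‖ := by
  rw [ContinuousLinearEquiv.conjContinuousAlgEquiv_apply]
  exact (LinearIsometry.norm_toContinuousLinearMap_comp U.toLinearIsometry).trans
    (T.opNorm_comp_linearIsometryEquiv U.symm)

end

variable {X Y : Type*} [NormedAddCommGroup X] [NormedSpace ℂ X] [CompleteSpace X]
  [NormedAddCommGroup Y] [NormedSpace ℂ Y] [CompleteSpace Y]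

theorem stmt13 (A : X ≃L[ℂ] Y) :
    (∀ T : X ≃L[ℂ] X,
      ‖(A : X →L[ℂ] Y).comp (((T : X →L[ℂ] X)).comp (A.symm : Y →L[ℂ] X))‖
        = ‖(T : X →L[ℂ] X)‖) ↔
    ∃ (c : ℂ) (U : X ≃ₗᵢ[ℂ] Y), ∀ x : X, A x = c • U x := by
  constructor
  · intro hA
    obtain ⟨r, hr, hAr⟩ := A.exists_pos_norm_apply_eq_mul hA
    obtain ⟨U, hAU⟩ := A.exists_linearIsometryEquiv_of_norm_apply_eq_mul hr hAr
    exact ⟨r, U, hAU⟩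
  · rintro ⟨c, U, hAU⟩ T
    exact (congrArg norm (A.conjContinuousAlgEquiv_eq_of_apply_eq_smul hAU T)).trans
      (U.norm_conjContinuousAlgEquiv T)
end

section
/- Let A : X → Y and B : Y → X be bijective bounded linear operators between Banach spaces such that ‖A T B‖ = ‖T‖ for all invertible operators T ∈ B(X). Then there exist bijective linear isometries U : X → Y and V : Y → X and scalars λ, μ ∈ ℂ with |λμ| = 1 such that A = λU and B = μV. -/
/-!
Testing the hypothesis on the invertible rank-one perturbations `1 + t • (f ⊗ x)` of the
identity and letting `‖t‖ → ∞` gives `‖(f ∘ B) ⊗ A x‖ = ‖f ⊗ x‖`, that is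
`‖f ∘ B‖ * ‖A x‖ = ‖f‖ * ‖x‖` for every functional `f` and vector `x`. Fixing one pair, `A`
scales all norms by some `k⁻¹ > 0` and `f ↦ f ∘ B` scales all norms by `k`; by Hahn–Banach
`B` then scales norms by `k`, so `k • A` and `k⁻¹ • B` are surjective isometries.
-/

open Metric Set Pointwise

variable {X Y : Type*} [NormedAddCommGroup X] [NormedSpace ℂ X] [CompleteSpace X]
  [NormedAddCommGroup Y] [NormedSpace ℂ Y] [CompleteSpace Y]

section NontriviallyNormedField

variable {𝕜 E F G : Type*} [NontriviallyNormedField 𝕜]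
  [SeminormedAddCommGroup E] [NormedSpace 𝕜 E] [SeminormedAddCommGroup F] [NormedSpace 𝕜 F]
  [SeminormedAddCommGroup G] [NormedSpace 𝕜 G]

theorem norm_le_of_forall_exists_norm_add_smul_eq {a b : F} {c d : G}
    (h : ∀ r : ℝ, ∃ t : 𝕜, r < ‖t‖ ∧ ‖a + t • b‖ = ‖c + t • d‖) : ‖b‖ ≤ ‖d‖ := by
  by_contra! hlt
  obtain ⟨t, ht, heq⟩ := h ((‖a‖ + ‖c‖) / (‖b‖ - ‖d‖))
  rw [div_lt_iff₀ (sub_pos.2 hlt)] at ht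
  have : ‖t‖ * ‖b‖ ≤ ‖a‖ + ‖c‖ + ‖t‖ * ‖d‖ :=
    calc ‖t‖ * ‖b‖ = ‖(a + t • b) - a‖ := by rw [add_sub_cancel_left, norm_smul]
      _ ≤ ‖c + t • d‖ + ‖a‖ := heq ▸ norm_sub_le _ _
      _ ≤ ‖a‖ + ‖c‖ + ‖t‖ * ‖d‖ := by grw [norm_add_le, norm_smul]; linarith
  linarith

theorem norm_eq_of_forall_exists_norm_add_smul_eq {a b : F} {c d : G}
    (h : ∀ r : ℝ, ∃ t : 𝕜, r < ‖t‖ ∧ ‖a + t • b‖ = ‖c + t • d‖) : ‖b‖ = ‖d‖ :=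
  le_antisymm (norm_le_of_forall_exists_norm_add_smul_eq h)
    (norm_le_of_forall_exists_norm_add_smul_eq fun r ↦ (h r).imp fun _ ⟨hr, he⟩ ↦ ⟨hr, he.symm⟩)

theorem exists_lt_norm_one_add_mul_ne_zero (a : 𝕜) (r : ℝ) :
    ∃ t : 𝕜, r < ‖t‖ ∧ 1 + t * a ≠ 0 := by
  obtain ⟨t, ht⟩ := NormedField.exists_lt_norm 𝕜 (max r ‖a‖⁻¹)
  refine ⟨t, (le_max_left _ _).trans_lt ht, fun h ↦ ?_⟩
  have hta : ‖t * a‖ = 1 := by rw [eq_neg_of_add_eq_zero_right h, norm_neg, norm_one]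
  rcases eq_or_ne a 0 with rfl | ha
  · simp at hta
  · have : ‖a‖⁻¹ < ‖t‖ := (le_max_right _ _).trans_lt ht
    rw [inv_lt_iff_one_lt_mul₀ (norm_pos_iff.2 ha), ← norm_mul, hta] at this
    exact this.false

noncomputable def ContinuousLinearEquiv.oneAddSmulRight (f : E →L[𝕜] 𝕜) (x : E)
    (hfx : 1 + f x ≠ 0) : E ≃L[𝕜] E :=
  .equivOfInverse (1 + f.smulRight x) (1 - (1 + f x)⁻¹ • f.smulRight x)
    (fun z ↦ by
      have : (1 + f x)⁻¹ * (f z + f z * f x) = f z := by field_simp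
      simp [smul_smul, this])
    (fun z ↦ by
      have : f z - (1 + f x)⁻¹ * f z * f x = (1 + f x)⁻¹ * f z := by field_simp; ring
      simp [smul_smul, this])

@[simp]
theorem ContinuousLinearEquiv.coe_oneAddSmulRight (f : E →L[𝕜] 𝕜) (x : E) (hfx : 1 + f x ≠ 0) :
    (oneAddSmulRight f x hfx : E →L[𝕜] E) = 1 + f.smulRight x :=
  rfl

theorem norm_comp_mul_norm_eq_of_forall_norm_comp_comp_eq (A : E →L[𝕜] F) (B : F →L[𝕜] E)
    (h : ∀ T : E ≃L[𝕜] E, ‖A.comp ((T : E →L[𝕜] E).comp B)‖ = ‖(T : E →L[𝕜] E)‖)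
    (f : E →L[𝕜] 𝕜) (x : E) : ‖f.comp B‖ * ‖A x‖ = ‖f‖ * ‖x‖ := by
  rw [← ContinuousLinearMap.norm_smulRight_apply, ← ContinuousLinearMap.norm_smulRight_apply]
  refine norm_eq_of_forall_exists_norm_add_smul_eq (𝕜 := 𝕜) (a := A.comp B)
    (c := (1 : E →L[𝕜] E)) fun r ↦ ?_
  obtain ⟨t, hr, ht⟩ := exists_lt_norm_one_add_mul_ne_zero (f x) r
  refine ⟨t, hr, ?_⟩
  have hT : ((ContinuousLinearEquiv.oneAddSmulRight (t • f) x ht : E ≃L[𝕜] E) : E →L[𝕜] E)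
      = 1 + t • f.smulRight x := by
    ext; simp [mul_smul]
  rw [← hT, ← h]
  congr 1
  ext; simp [hT]

end NontriviallyNormedField

section RCLike

variable {𝕜 E F : Type*} [RCLike 𝕜]
  [NormedAddCommGroup E] [NormedSpace 𝕜 E] [NormedAddCommGroup F] [NormedSpace 𝕜 F]

theorem ContinuousLinearMap.norm_apply_le_of_forall_norm_comp_le (B : F →L[𝕜] E) {k : ℝ}
    (hk : 0 ≤ k) (hB : ∀ f : E →L[𝕜] 𝕜, ‖f.comp B‖ ≤ k * ‖f‖) (y : F) : ‖B y‖ ≤ k * ‖y‖ :=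
  NormedSpace.norm_le_dual_bound 𝕜 _ (by positivity) fun f ↦
    calc ‖f (B y)‖ = ‖(f.comp B) y‖ := rfl
      _ ≤ ‖f.comp B‖ * ‖y‖ := le_opNorm _ _
      _ ≤ k * ‖y‖ * ‖f‖ := by grw [hB f]; linarith

theorem ContinuousLinearEquiv.norm_apply_eq_of_forall_norm_comp_eq (B : F ≃L[𝕜] E) {k : ℝ}
    (hk : 0 < k) (hB : ∀ f : E →L[𝕜] 𝕜, ‖f.comp (B : F →L[𝕜] E)‖ = k * ‖f‖) (y : F) :
    ‖B y‖ = k * ‖y‖ := by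
  have hBsymm : ∀ g : F →L[𝕜] 𝕜, ‖g.comp (B.symm : E →L[𝕜] F)‖ ≤ k⁻¹ * ‖g‖ := fun g ↦ by
    have := hB (g.comp (B.symm : E →L[𝕜] F))
    rw [ContinuousLinearMap.comp_assoc, coe_symm_comp_coe, ContinuousLinearMap.comp_id] at this
    rw [this, inv_mul_cancel_left₀ hk.ne']
  refine le_antisymm ((B : F →L[𝕜] E).norm_apply_le_of_forall_norm_comp_le hk.le (hB · |>.le) y) ?_
  have := (B.symm : E →L[𝕜] F).norm_apply_le_of_forall_norm_comp_le (inv_nonneg.2 hk.le)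
    hBsymm (B y)
  rw [coe_coe, symm_apply_apply] at this
  rwa [← le_inv_mul_iff₀ hk]

theorem exists_pos_norm_apply_eq_of_norm_comp_mul_norm_eq (A : E →L[𝕜] F) (B : F ≃L[𝕜] E)
    (hAB : ∀ (f : E →L[𝕜] 𝕜) (x : E), ‖f.comp (B : F →L[𝕜] E)‖ * ‖A x‖ = ‖f‖ * ‖x‖) :
    ∃ k > 0, (∀ x, ‖A x‖ = k⁻¹ * ‖x‖) ∧ ∀ y, ‖B y‖ = k * ‖y‖ := by
  rcases subsingleton_or_nontrivial E with hE | hE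
  · have : Subsingleton F := B.toEquiv.subsingleton
    exact ⟨1, one_pos, fun x ↦ by simp [Subsingleton.elim x 0],
      fun y ↦ by simp [Subsingleton.elim y 0]⟩
  obtain ⟨x₀, hx₀⟩ := exists_ne (0 : E)
  obtain ⟨f₀, hf₀, -⟩ := exists_dual_vector 𝕜 x₀ (norm_ne_zero_iff.2 hx₀)
  set k := ‖f₀.comp (B : F →L[𝕜] E)‖
  have hA : ∀ x, k * ‖A x‖ = ‖x‖ := fun x ↦ by simpa [hf₀] using hAB f₀ x
  have hkAx₀ : 0 < k * ‖A x₀‖ := (hA x₀).symm ▸ norm_pos_iff.2 hx₀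
  have hk : 0 < k := pos_of_mul_pos_left hkAx₀ (norm_nonneg _)
  have hAx₀ : 0 < ‖A x₀‖ := pos_of_mul_pos_right hkAx₀ hk.le
  refine ⟨k, hk, fun x ↦ by rw [← hA x, inv_mul_cancel_left₀ hk.ne'],
    B.norm_apply_eq_of_forall_norm_comp_eq hk fun f ↦ mul_right_cancel₀ hAx₀.ne' ?_⟩
  rw [hAB, ← hA x₀]
  ring

theorem ContinuousLinearEquiv.exists_linearIsometryEquiv_smul (A : E ≃L[𝕜] F) {c : ℝ}
    (hc : 0 < c) (hA : ∀ x, ‖A x‖ = c * ‖x‖) : ∃ U : E ≃ₗᵢ[𝕜] F, ∀ x, A x = (c : 𝕜) • U x := by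
  have hc' : (c : 𝕜) ≠ 0 := RCLike.ofReal_ne_zero.2 hc.ne'
  refine ⟨⟨A.toLinearEquiv.trans (.smulOfNeZero 𝕜 F _ (inv_ne_zero hc')), fun x ↦ ?_⟩,
    fun x ↦ ?_⟩
  · simp [norm_smul, hA, abs_of_pos hc, inv_mul_cancel_left₀ hc.ne']
  · simp [smul_smul, mul_inv_cancel₀ hc']

end RCLike

theorem stmt14 (A : X ≃L[ℂ] Y) (B : Y ≃L[ℂ] X)
    (h : ∀ T : X ≃L[ℂ] X,
      ‖(A : X →L[ℂ] Y).comp (((T : X →L[ℂ] X)).comp (B : Y →L[ℂ] X))‖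
        = ‖(T : X →L[ℂ] X)‖) :
    ∃ (U : X ≃ₗᵢ[ℂ] Y) (V : Y ≃ₗᵢ[ℂ] X) (lam mu : ℂ),
      ‖lam * mu‖ = 1 ∧ (∀ x : X, A x = lam • U x) ∧
      ∀ y : Y, B y = mu • V y := by
  obtain ⟨k, hk, hA, hB⟩ := exists_pos_norm_apply_eq_of_norm_comp_mul_norm_eq (A : X →L[ℂ] Y) B
    (norm_comp_mul_norm_eq_of_forall_norm_comp_comp_eq _ _ h)
  obtain ⟨U, hU⟩ := A.exists_linearIsometryEquiv_smul (inv_pos.2 hk) hA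
  obtain ⟨V, hV⟩ := B.exists_linearIsometryEquiv_smul hk hB
  exact ⟨U, V, _, _, by simp [hk.ne'], hU, hV⟩
end

section
/- Let A : X → Y be a bijective bounded linear operator. If ‖Ax‖·‖(A⁻¹)*f‖ ≤ ‖x‖·‖f‖ for all x ∈ X and f ∈ X*, then A/‖A‖ is an isometry. -/
open Metric Set Pointwise

variable {X Y : Type*} [NormedAddCommGroup X] [NormedSpace ℂ X] [CompleteSpace X]
  [NormedAddCommGroup Y] [NormedSpace ℂ Y] [CompleteSpace Y]

namespace ContinuousLinearMap

variable {𝕜 E F : Type*} [NontriviallyNormedField 𝕜] [SeminormedAddCommGroup E]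
  [NormedSpace 𝕜 E] [SeminormedAddCommGroup F] [NormedSpace 𝕜 F]

theorem opNorm_mul_le_of_forall_norm_apply_mul_le {T : E →L[𝕜] F} {c M : ℝ} (hc : 0 ≤ c)
    (hM : 0 ≤ M) (h : ∀ x, ‖T x‖ * c ≤ M * ‖x‖) : ‖T‖ * c ≤ M := by
  rcases hc.eq_or_lt with rfl | hc
  · simpa using hM
  have hT : ‖T‖ ≤ M / c :=
    T.opNorm_le_bound (div_nonneg hM hc.le) fun x => by
      rw [div_mul_eq_mul_div, le_div_iff₀ hc]
      exact h x
  exact (le_div_iff₀ hc).mp hT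

end ContinuousLinearMap

/- Take a Hahn–Banach functional `f` with `‖f‖ ≤ 1` and `f x = ‖x‖`, and put `g = f ∘ A⁻¹`.
The hypothesis at `f` gives `‖A‖ ‖g‖ ≤ 1`, while `‖x‖ = g (A x) ≤ ‖g‖ ‖A x‖`. -/
theorem ContinuousLinearEquiv.norm_apply_eq_opNorm_mul_norm_of_norm_apply_mul_norm_comp_symm_le
    {𝕜 E F : Type*} [RCLike 𝕜] [NormedAddCommGroup E] [NormedSpace 𝕜 E]
    [NormedAddCommGroup F] [NormedSpace 𝕜 F] (A : E ≃L[𝕜] F)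
    (h : ∀ (x : E) (f : StrongDual 𝕜 E), ‖A x‖ * ‖f.comp (A.symm : F →L[𝕜] E)‖ ≤ ‖x‖ * ‖f‖)
    (x : E) : ‖A x‖ = ‖(A : E →L[𝕜] F)‖ * ‖x‖ := by
  refine le_antisymm ((A : E →L[𝕜] F).le_opNorm x) ?_
  obtain ⟨f, hf, hfx⟩ := exists_dual_vector'' 𝕜 x
  set g := f.comp (A.symm : F →L[𝕜] E)
  have hA : ‖(A : E →L[𝕜] F)‖ * ‖g‖ ≤ 1 :=
    ContinuousLinearMap.opNorm_mul_le_of_forall_norm_apply_mul_le (norm_nonneg g) zero_le_one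
      fun y => (h y f).trans (by simpa using mul_le_of_le_one_right (norm_nonneg y) hf)
  have hx : ‖x‖ ≤ ‖g‖ * ‖A x‖ := by
    calc ‖x‖ = ‖g (A x)‖ := by simp [g, hfx]
      _ ≤ ‖g‖ * ‖A x‖ := g.le_opNorm _
  calc ‖(A : E →L[𝕜] F)‖ * ‖x‖ ≤ ‖(A : E →L[𝕜] F)‖ * (‖g‖ * ‖A x‖) := by gcongr
    _ = ‖(A : E →L[𝕜] F)‖ * ‖g‖ * ‖A x‖ := (mul_assoc _ _ _).symm
    _ ≤ ‖A x‖ := mul_le_of_le_one_left (norm_nonneg _) hA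

theorem stmt16 (A : X ≃L[ℂ] Y)
    (h : ∀ (x : X) (f : X →L[ℂ] ℂ),
      ‖A x‖ * ‖f.comp (A.symm : Y →L[ℂ] X)‖ ≤ ‖x‖ * ‖f‖) :
    ∀ x : X, ‖A x‖ = ‖(A : X →L[ℂ] Y)‖ * ‖x‖ :=
  A.norm_apply_eq_opNorm_mul_norm_of_norm_apply_mul_norm_comp_symm_le h
end
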